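/- Let Q be an integral sharp additive commutative monoid. Then for every integer c > 0 and every i ≥ 0: (1) Q_c^{(i)} is a submonoid of G ⊗_ℤ ℚ and is sharp (γ + δ = 0 with γ, δ ∈ Q_c^{(i)} implies γ = 0); (2) the map Q_c^{(i+1)} → Q_c^{(i)} sending γ to c • γ is a well-defined bijective monoid homomorphism. -/

import Mathlib

/-! The map `q ↦ 1 ⊗ ι q` from `Q` to `ℚ ⊗[ℤ] G` has trivial kernel: an element it kills is
torsion in `G`, hence (as `ι` is injective) of finite order in `Q`, hence an additive unit,
hence `0` by sharpness. Sharpness of `Q_c^{(i)}` follows after multiplying by `c ^ i`, and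
the rest is rational linear algebra: membership in `Q_ℚ` is automatic, and `c •` is
invertible on `ℚ ⊗[ℤ] G`. -/

universe u v

open scoped TensorProduct

namespace Stmt2

variable {Q : Type u} [AddCommMonoid Q] {G : Type v} [AddCommGroup G]

/-- The submonoid-like subset `Q_ℚ` of `G ⊗_ℤ ℚ` (realized as `ℚ ⊗[ℤ] G`), consisting of
the nonnegative rational multiples of elements of the image of `Q`. -/
noncomputable def QQset (ι : Q →+ G) : Set (ℚ ⊗[ℤ] G) :=
  {x | ∃ (q : Q) (r : ℚ), 0 ≤ r ∧ x = r • ((1 : ℚ) ⊗ₜ[ℤ] ι q)}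

/-- The subset `Q_c^{(i)} = {γ ∈ Q_ℚ | c^i • γ ∈ Q}` of `G ⊗_ℤ ℚ`. -/
noncomputable def Qci (ι : Q →+ G) (c i : ℕ) : Set (ℚ ⊗[ℤ] G) :=
  {γ | γ ∈ QQset ι ∧ (c ^ i) • γ ∈ Set.range (fun q : Q => (1 : ℚ) ⊗ₜ[ℤ] ι q)}

theorem isOfFinAddOrder_of_one_tmul_eq_zero {g : G} (h : (1 : ℚ) ⊗ₜ[ℤ] g = 0) :
    IsOfFinAddOrder g := by
  obtain ⟨s, hs⟩ :=
    (IsLocalizedModule.eq_zero_iff (nonZeroDivisors ℤ) (TensorProduct.mk ℤ ℚ G 1)).1 h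
  exact isOfFinAddOrder_iff_zsmul_eq_zero.2 ⟨s, nonZeroDivisors.coe_ne_zero s, hs⟩

theorem eq_zero_of_isOfFinAddOrder (hsharp : ∀ x y : Q, x + y = 0 → x = 0) {a : Q}
    (ha : IsOfFinAddOrder a) : a = 0 := by
  obtain ⟨b, hab, -⟩ := isAddUnit_iff_exists.1 ha.isAddUnit
  exact hsharp a b hab

theorem eq_zero_of_one_tmul_eq_zero (hsharp : ∀ x y : Q, x + y = 0 → x = 0) {ι : Q →+ G}
    (hι : Function.Injective ι) {a : Q} (h : (1 : ℚ) ⊗ₜ[ℤ] ι a = 0) : a = 0 :=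
  eq_zero_of_isOfFinAddOrder hsharp <| hι.isOfFinAddOrder_iff.1 <|
    isOfFinAddOrder_of_one_tmul_eq_zero h

theorem nsmul_right_injective_of_module_rat {V : Type*} [AddCommGroup V] [Module ℚ V] {c : ℕ}
    (hc : c ≠ 0) : Function.Injective fun x : V => c • x := by
  intro x y h
  simp only [← Nat.cast_smul_eq_nsmul ℚ c] at h
  exact smul_right_injective _ (Nat.cast_ne_zero.2 hc) h

variable {ι : Q →+ G} {c : ℕ} {γ : ℚ ⊗[ℤ] G}

theorem mem_Qci_iff (hc : c ≠ 0) {i : ℕ} :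
    γ ∈ Qci ι c i ↔ ∃ a : Q, (1 : ℚ) ⊗ₜ[ℤ] ι a = c ^ i • γ := by
  refine ⟨fun h => h.2, fun ⟨a, ha⟩ => ⟨⟨a, ((c ^ i : ℕ) : ℚ)⁻¹, by positivity, ?_⟩, a, ha⟩⟩
  rw [ha, ← Nat.cast_smul_eq_nsmul ℚ, inv_smul_smul₀ (by positivity)]

theorem nsmul_mem_Qci_iff (hc : c ≠ 0) {i : ℕ} : c • γ ∈ Qci ι c i ↔ γ ∈ Qci ι c (i + 1) := by
  rw [mem_Qci_iff hc, mem_Qci_iff hc, smul_smul, ← pow_succ]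

theorem zero_mem_Qci (i : ℕ) : (0 : ℚ ⊗[ℤ] G) ∈ Qci ι c i :=
  ⟨⟨0, 0, le_rfl, by simp⟩, 0, by simp⟩

theorem add_mem_Qci (hc : c ≠ 0) {i : ℕ} {x y : ℚ ⊗[ℤ] G} (hx : x ∈ Qci ι c i)
    (hy : y ∈ Qci ι c i) : x + y ∈ Qci ι c i := by
  obtain ⟨a, ha⟩ := (mem_Qci_iff hc).1 hx
  obtain ⟨b, hb⟩ := (mem_Qci_iff hc).1 hy
  exact (mem_Qci_iff hc).2 ⟨a + b, by rw [map_add, TensorProduct.tmul_add, ha, hb, smul_add]⟩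

theorem eq_zero_of_add_eq_zero_of_mem_Qci (hsharp : ∀ x y : Q, x + y = 0 → x = 0)
    (hι : Function.Injective ι) (hc : c ≠ 0) {i : ℕ} {x y : ℚ ⊗[ℤ] G} (hx : x ∈ Qci ι c i)
    (hy : y ∈ Qci ι c i) (hxy : x + y = 0) : x = 0 := by
  obtain ⟨a, ha⟩ := (mem_Qci_iff hc).1 hx
  obtain ⟨b, hb⟩ := (mem_Qci_iff hc).1 hy
  have hab : (1 : ℚ) ⊗ₜ[ℤ] ι (a + b) = 0 := by
    rw [map_add, TensorProduct.tmul_add, ha, hb, ← smul_add, hxy, smul_zero]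
  have ha0 : a = 0 := hsharp a b (eq_zero_of_one_tmul_eq_zero hsharp hι hab)
  refine nsmul_right_injective_of_module_rat (pow_ne_zero i hc) ?_
  simp only [← ha, ha0, map_zero, TensorProduct.tmul_zero, smul_zero]

theorem bijOn_nsmul_Qci (hc : c ≠ 0) (i : ℕ) :
    Set.BijOn (fun γ => c • γ) (Qci ι c (i + 1)) (Qci ι c i) := by
  refine ⟨fun γ hγ => (nsmul_mem_Qci_iff hc).2 hγ,
    (nsmul_right_injective_of_module_rat hc).injOn, fun δ hδ => ?_⟩
  have hcδ : c • ((c : ℚ)⁻¹ • δ) = δ := by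
    rw [← Nat.cast_smul_eq_nsmul ℚ, smul_inv_smul₀ (Nat.cast_ne_zero.2 hc)]
  exact ⟨(c : ℚ)⁻¹ • δ, (nsmul_mem_Qci_iff hc).1 (by rwa [hcδ]), hcδ⟩

theorem stmt2 (Q : Type u) [AddCommMonoid Q]
    (hsharp : ∀ x y : Q, x + y = 0 → x = 0)
    (G : Type v) [AddCommGroup G] (ι : Q →+ G) (hι : Function.Injective ι)
    (c i : ℕ) (hc : 0 < c) :
    ((0 : ℚ ⊗[ℤ] G) ∈ Qci ι c i ∧
      (∀ x ∈ Qci ι c i, ∀ y ∈ Qci ι c i, x + y ∈ Qci ι c i) ∧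
      (∀ x ∈ Qci ι c i, ∀ y ∈ Qci ι c i, x + y = 0 → x = 0)) ∧
    ((∀ γ ∈ Qci ι c (i + 1), c • γ ∈ Qci ι c i) ∧
      Set.BijOn (fun γ => c • γ) (Qci ι c (i + 1)) (Qci ι c i)) := by
  have hc : c ≠ 0 := hc.ne'
  exact ⟨⟨zero_mem_Qci i, fun x hx y hy => add_mem_Qci hc hx hy,
      fun x hx y hy => eq_zero_of_add_eq_zero_of_mem_Qci hsharp hι hc hx hy⟩,
    fun γ hγ => (nsmul_mem_Qci_iff hc).2 hγ, bijOn_nsmul_Qci hc i⟩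

end Stmt2
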